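/- arXiv:1607.07098 — 3 statements merged into one kernel-verified Lean document; each statement's English description precedes it below -/
import Mathlib

section
/- For 0 < α < 1 and every integer n ≥ 1, the coefficient l_{n-1}^α = ∑_{k=0}^{n-1} (-1)^k binom(α,k) satisfies the lower bound l_{n-1}^α ≥ 1/(n^α · Γ(1-α)). -/
noncomputable def binom (α : ℝ) (k : ℕ) : ℝ :=
  (∏ i ∈ Finset.range k, (α - i)) / (Nat.factorial k)

noncomputable def g (α : ℝ) (k : ℕ) : ℝ := (-1) ^ k * binom α k

noncomputable def lcoef (α : ℝ) (n : ℕ) : ℝ := ∑ k ∈ Finset.range (n + 1), g α k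

/-!
Telescoping the partial sums gives `l_m = (1 - α)⋯(m - α) / m! = Γ(m + 1 - α) / (Γ(1 - α) Γ(m + 1))`.
Log-convexity of `Γ` (Hölder between `s` and `s + 1`) gives Wendel's inequality
`Γ(s + α) ≤ Γ(s) s^α`, which at `s = m + 1 - α` bounds `Γ(m + 1) / Γ(m + 1 - α)` by `(m + 1)^α`.
-/

open Finset
open scoped Nat

lemma g_eq_prod_div_factorial (α : ℝ) (k : ℕ) :
    g α k = (∏ i ∈ range k, ((i : ℝ) - α)) / k ! := by
  have hneg := prod_neg (s := range k) (fun i : ℕ => α - i)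
  rw [card_range] at hneg
  simp only [neg_sub] at hneg
  rw [g, binom, ← mul_div_assoc, ← hneg]

lemma lcoef_eq_prod_div_factorial (α : ℝ) (n : ℕ) :
    lcoef α n = (∏ i ∈ range n, ((i : ℝ) + 1 - α)) / n ! := by
  induction n with
  | zero => simp [lcoef, g, binom]
  | succ n ih =>
    have hg : g α (n + 1) = -α * (∏ i ∈ range n, ((i : ℝ) + 1 - α)) / (n + 1)! := by
      rw [g_eq_prod_div_factorial, prod_range_succ']
      push_cast
      ring
    rw [lcoef, sum_range_succ, ← lcoef, ih, hg, prod_range_succ, Nat.factorial_succ]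
    push_cast
    field_simp
    ring

lemma Real.Gamma_add_nat_eq_prod_mul {s : ℝ} (hs : 0 < s) (n : ℕ) :
    Real.Gamma (s + n) = (∏ i ∈ range n, (s + i)) * Real.Gamma s := by
  induction n with
  | zero => simp
  | succ n ih =>
    rw [Nat.cast_succ, ← add_assoc, Real.Gamma_add_one (by positivity), ih, prod_range_succ]
    ring

lemma Real.Gamma_add_le_Gamma_mul_rpow {s α : ℝ} (hs : 0 < s) (hα0 : 0 < α) (hα1 : α < 1) :
    Real.Gamma (s + α) ≤ Real.Gamma s * s ^ α := by
  have hconvex := Real.Gamma_mul_add_mul_le_rpow_Gamma_mul_rpow_Gamma hs (by linarith : 0 < s + 1)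
    (by linarith : 0 < 1 - α) hα0 (by ring)
  rw [Real.Gamma_add_one hs.ne', Real.mul_rpow hs.le (Real.Gamma_pos_of_pos hs).le,
    show (1 - α) * s + α * (s + 1) = s + α by ring] at hconvex
  calc Real.Gamma (s + α) ≤ Real.Gamma s ^ (1 - α) * (s ^ α * Real.Gamma s ^ α) := hconvex
    _ = Real.Gamma s * s ^ α := by
      rw [mul_left_comm, ← Real.rpow_add (Real.Gamma_pos_of_pos hs), sub_add_cancel,
        Real.rpow_one, mul_comm]

lemma lcoef_eq_Gamma_div {α : ℝ} (hα1 : α < 1) (m : ℕ) :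
    lcoef α m = Real.Gamma (1 - α + m) / (Real.Gamma (1 - α) * Real.Gamma (m + 1)) := by
  have hGamma_pos : 0 < Real.Gamma (1 - α) := Real.Gamma_pos_of_pos (by linarith)
  rw [lcoef_eq_prod_div_factorial, Real.Gamma_add_nat_eq_prod_mul (by linarith),
    Real.Gamma_nat_eq_factorial,
    prod_congr rfl fun (i : ℕ) _ => (by ring : (i : ℝ) + 1 - α = 1 - α + i)]
  field_simp

lemma one_div_rpow_mul_Gamma_le_lcoef {α : ℝ} (hα0 : 0 < α) (hα1 : α < 1) (m : ℕ) :
    1 / (((m : ℝ) + 1) ^ α * Real.Gamma (1 - α)) ≤ lcoef α m := by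
  set s : ℝ := 1 - α + m
  have hs : 0 < s := by positivity
  have hGamma_one_sub : 0 < Real.Gamma (1 - α) := Real.Gamma_pos_of_pos (by linarith)
  have hGamma_succ : Real.Gamma (m + 1) ≤ Real.Gamma s * ((m : ℝ) + 1) ^ α :=
    calc Real.Gamma (m + 1) = Real.Gamma (s + α) := by congr 1; ring
      _ ≤ Real.Gamma s * s ^ α := Real.Gamma_add_le_Gamma_mul_rpow hs hα0 hα1
      _ ≤ Real.Gamma s * ((m : ℝ) + 1) ^ α := by gcongr; linarith
  rw [lcoef_eq_Gamma_div hα1, div_le_div_iff₀ (by positivity)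
    (mul_pos hGamma_one_sub (Real.Gamma_pos_of_pos (by positivity)))]
  linarith [mul_le_mul_of_nonneg_left hGamma_succ hGamma_one_sub.le]

theorem stmt_4 (α : ℝ) (hα0 : 0 < α) (hα1 : α < 1) :
    ∀ n : ℕ, 1 ≤ n →
      1 / ((n : ℝ) ^ α * Real.Gamma (1 - α)) ≤ lcoef α (n - 1) := by
  intro n hn
  obtain ⟨m, rfl⟩ := Nat.exists_eq_add_of_le' hn
  simpa using one_div_rpow_mul_Gamma_le_lcoef hα0 hα1 m
end

section
/- Let 0 < α < 1, λ ∈ ℂ, τ > 0, r ∈ ℝ. For f ∈ L¹(ℝ) with Fourier transform f̂, the Fourier transform of A_{τ,r}^{α,λ} f(t) = τ^{-α} ∑_{k=0}^∞ e^{-λ(k-r)τ} g_k^α f(t - (k-r)τ) equals (λ - iω)^α · W_{α,r}((λ - iω)τ) · f̂(ω), where W_{α,r}(z) = ((1 - e^{-z})/z)^α e^{rz}. -/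
/-!
A shift by `a` multiplies the Fourier transform by `e^{iωa}`, and `∑ |g_k| < ∞` lets the
transform be taken termwise, so the transform of `A f` is `f̂(ω)` times the symbol
`τ^{-α} e^{urτ} ∑ g_k x^k` with `u = λ - iω`, `x = e^{-uτ}`, `|x| ≤ 1`, and the binomial series
sums to `(1 - x)^α` on the whole closed unit disc. Finally
`τ^{-α} (1 - e^{-z})^α = u^α ((1 - e^{-z})/z)^α` for `z = uτ`: the factors `u` and
`(1 - e^{-z})/z` multiply to `(1 - e^{-z})/τ`, which lies in the open right half-plane
(or vanishes), so their principal arguments add without crossing the branch cut.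
-/

open Complex MeasureTheory

/-- `W_{α,r}(z) = ((1 - e^{-z})/z)^α e^{rz}` (principal branch). -/
noncomputable def W (α r : ℝ) (z : ℂ) : ℂ :=
  ((1 - Complex.exp (-z)) / z) ^ (α : ℂ) * Complex.exp (r * z)

/-- `A_{τ,r}^{α,λ} f (t) = τ^{-α} ∑_{k=0}^∞ e^{-λ(k-r)τ} g_k^α f(t-(k-r)τ)`. -/
noncomputable def Aop (α : ℝ) (lam : ℂ) (τ r : ℝ) (f : ℝ → ℂ) (t : ℝ) : ℂ :=
  (τ : ℂ) ^ (-(α : ℂ)) *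
    ∑' k : ℕ, Complex.exp (-lam * ((k : ℝ) - r) * τ) * (g α k : ℂ) * f (t - ((k : ℝ) - r) * τ)

section Coefficients

variable (α : ℝ)

lemma g_zero : g α 0 = 1 := by simp [g, binom]

lemma g_succ (k : ℕ) : g α (k + 1) = g α k * (k - α) / (k + 1) := by
  simp only [g, binom, Finset.prod_range_succ, Nat.factorial_succ, pow_succ]
  push_cast
  field_simp
  ring

lemma g_succ_eq_neg_mul_g_sub_one (n : ℕ) : g α (n + 1) = -α * g (α - 1) n / (n + 1) := by
  induction n with
  | zero => simp [g_succ, g_zero]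
  | succ n ih =>
    rw [g_succ, ih, g_succ (α - 1)]
    push_cast
    field_simp
    ring

lemma sum_range_succ_g (n : ℕ) : ∑ k ∈ Finset.range (n + 1), g α k = g (α - 1) n := by
  induction n with
  | zero => simp [g_zero]
  | succ n ih =>
    rw [Finset.sum_range_succ, ih, g_succ_eq_neg_mul_g_sub_one, g_succ (α - 1)]
    field_simp
    ring

variable {α}

lemma g_sub_one_nonneg (hα : α ≤ 1) (n : ℕ) : 0 ≤ g (α - 1) n := by
  induction n with
  | zero => simp [g_zero]
  | succ n ih =>
    rw [g_succ]
    have : (0 : ℝ) ≤ n - (α - 1) := by linarith [(n.cast_nonneg : (0 : ℝ) ≤ n)]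
    positivity

lemma g_succ_nonpos (hα0 : 0 ≤ α) (hα1 : α ≤ 1) (k : ℕ) : g α (k + 1) ≤ 0 := by
  rw [g_succ_eq_neg_mul_g_sub_one, neg_mul, neg_div]
  have := g_sub_one_nonneg hα1 k
  exact neg_nonpos.2 (by positivity)

-- `g_0 = 1` and `g_k ≤ 0` for `k ≥ 1`, so `∑_{k=1}^{n+1} |g_k| = 1 - g^{α-1}_n ≤ 1`.
lemma summable_abs_g (hα0 : 0 ≤ α) (hα1 : α ≤ 1) : Summable fun k => |g α k| := by
  refine (summable_nat_add_iff 1).mp (summable_of_sum_range_le (c := 1) (fun _ => abs_nonneg _)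
    fun n => ?_)
  have hsum := sum_range_succ_g α n
  rw [Finset.sum_range_succ', g_zero] at hsum
  simp only [abs_of_nonpos (g_succ_nonpos hα0 hα1 _), Finset.sum_neg_distrib]
  linarith [g_sub_one_nonneg hα1 n]

end Coefficients

section BinomialSeries

lemma g_eq_neg_one_pow_mul_choose (α : ℝ) (k : ℕ) : g α k = (-1) ^ k * Ring.choose α k := by
  rw [g, Ring.choose_eq_smul, binom, ← descPochhammer_eval_eq_prod_range,
    ← Polynomial.aeval_eq_smeval, ← descPochhammer_map (algebraMap ℤ ℝ),
    Polynomial.eval_map_algebraMap, smul_eq_mul, div_eq_inv_mul]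

lemma hasSum_g_mul_pow_of_norm_lt_one (α : ℝ) {x : ℂ} (hx : ‖x‖ < 1) :
    HasSum (fun k => (g α k : ℂ) * x ^ k) ((1 - x) ^ (α : ℂ)) := by
  have h := Complex.one_add_cpow_hasFPowerSeriesOnBall_zero (a := α).hasSum
    (y := -x) (by rw [← ENNReal.ofReal_one, Metric.eball_ofReal]; simpa using hx)
  simp only [binomialSeries_apply, List.ofFn_const, List.prod_replicate, smul_eq_mul] at h
  rw [zero_add, ← sub_eq_add_neg] at h
  refine h.congr_fun fun k => ?_
  rw [g_eq_neg_one_pow_mul_choose, neg_pow, ← Complex.ofReal_choose]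
  push_cast
  ring

-- Extends the open-disc identity to the boundary by continuity: `∑ |g_k| < ∞` makes the series
-- converge uniformly on the closed disc.
lemma hasSum_g_mul_pow {α : ℝ} (hα0 : 0 < α) (hα1 : α ≤ 1) {x : ℂ} (hx : ‖x‖ ≤ 1) :
    HasSum (fun k => (g α k : ℂ) * x ^ k) ((1 - x) ^ (α : ℂ)) := by
  have hbound : ∀ k, ∀ y ∈ Metric.closedBall (0 : ℂ) 1, ‖(g α k : ℂ) * y ^ k‖ ≤ |g α k| := by
    intro k y hy
    rw [norm_mul, norm_pow, Complex.norm_real, Real.norm_eq_abs]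
    exact mul_le_of_le_one_right (abs_nonneg _)
      (pow_le_one₀ (norm_nonneg _) (mem_closedBall_zero_iff.1 hy))
  have hsum := summable_abs_g hα0.le hα1
  have hseries : ContinuousOn (fun y => ∑' k, (g α k : ℂ) * y ^ k) (Metric.closedBall 0 1) :=
    continuousOn_tsum (fun k => by fun_prop) hsum hbound
  have hpow : ContinuousOn (fun y : ℂ => (1 - y) ^ (α : ℂ)) (Metric.closedBall 0 1) := by
    intro y hy
    have hre : 0 ≤ (1 - y).re := by
      simpa using (Complex.re_le_norm y).trans (mem_closedBall_zero_iff.1 hy)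
    exact ((Complex.continuousAt_cpow_const_of_re_pos (Or.inl hre) (by simpa using hα0)).comp
      (continuousAt_const.sub continuousAt_id)).continuousWithinAt
  have hopen : Set.EqOn (fun y => ∑' k, (g α k : ℂ) * y ^ k) (fun y => (1 - y) ^ (α : ℂ))
      (Metric.ball 0 1) := fun y hy =>
    (hasSum_g_mul_pow_of_norm_lt_one α (mem_ball_zero_iff.1 hy)).tsum_eq
  have hx' : x ∈ Metric.closedBall (0 : ℂ) 1 := mem_closedBall_zero_iff.2 hx
  have hclosed : ∑' k, (g α k : ℂ) * x ^ k = (1 - x) ^ (α : ℂ) :=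
    hopen.of_subset_closure hseries hpow Metric.ball_subset_closedBall
      (closure_ball 0 one_ne_zero).ge hx'
  rw [← hclosed]
  exact (Summable.of_norm_bounded hsum fun k => hbound k x hx').hasSum

end BinomialSeries

section Branch

-- `arg u ∈ [-π/2, π/2]` and `arg (u * v) ∈ (-π/2, π/2)`, so `arg v = arg (u * v) - arg u` exactly.
open Real in
lemma Complex.mul_cpow_of_re_nonneg_of_re_mul_pos {u v : ℂ} (hu : 0 ≤ u.re)
    (huv : 0 < (u * v).re) (a : ℂ) : (u * v) ^ a = u ^ a * v ^ a := by
  have huv0 : u * v ≠ 0 := fun h => by simp [h] at huv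
  have hu0 : u ≠ 0 := left_ne_zero_of_mul huv0
  have hv0 : v ≠ 0 := right_ne_zero_of_mul huv0
  have hargu := abs_le.1 (abs_arg_le_pi_div_two_iff.2 hu)
  have harguv := abs_lt.1 (abs_arg_lt_pi_div_two_iff.2 (Or.inl huv))
  have hargv : arg v = arg (u * v) - arg u := by
    have h := arg_div_coe_angle huv0 hu0
    rw [mul_div_cancel_left₀ v hu0, ← Real.Angle.coe_sub, arg_coe_angle_eq_iff_eq_toReal,
      Real.Angle.toReal_coe_eq_self_iff.2 ⟨by linarith, by linarith⟩] at h
    exact h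
  have hlog : log (u * v) = log u + log v :=
    log_mul hu0 hv0 ⟨by linarith, by linarith⟩
  rw [cpow_def_of_ne_zero huv0, cpow_def_of_ne_zero hu0, cpow_def_of_ne_zero hv0, hlog, add_mul,
    exp_add]

lemma Complex.re_one_sub_exp_neg_pos {z : ℂ} (hz : 0 ≤ z.re) (h : exp (-z) ≠ 1) :
    0 < (1 - exp (-z)).re := by
  set ζ := exp (-z)
  have hζ : ‖ζ‖ ≤ 1 := by rw [norm_exp]; simpa using hz
  rw [sub_re, one_re, sub_pos]
  by_contra! hre
  have hsq : ζ.re * ζ.re + ζ.im * ζ.im ≤ 1 := by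
    rw [← normSq_apply, ← Complex.sq_norm]
    nlinarith [norm_nonneg ζ]
  have him : ζ.im = 0 := by nlinarith
  exact h (Complex.ext (by simp only [one_re]; nlinarith) him)

lemma Complex.cpow_mul_one_sub_exp_neg_div {u : ℂ} (hu : 0 ≤ u.re) {τ : ℝ} (hτ : 0 < τ) (a : ℂ) :
    u ^ a * ((1 - exp (-(u * τ))) / (u * τ)) ^ a = (τ : ℂ) ^ (-a) * (1 - exp (-(u * τ))) ^ a := by
  by_cases hw : exp (-(u * τ)) = 1
  · rcases eq_or_ne a 0 with rfl | ha <;> simp [zero_cpow, *]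
  set w := 1 - exp (-(u * τ))
  have hwre : 0 < w.re := re_one_sub_exp_neg_pos (by simpa using mul_nonneg hu hτ.le) hw
  have hu0 : u ≠ 0 := by rintro rfl; simp at hw
  have hτ0 : (τ : ℂ) ≠ 0 := ofReal_ne_zero.2 hτ.ne'
  have hwτ : 0 < (w / τ).re := by rw [div_ofReal_re]; positivity
  have huw : u * (w / (u * τ)) = w / τ := by field_simp
  calc u ^ a * (w / (u * τ)) ^ a
      = (w / τ) ^ a := by rw [← huw, mul_cpow_of_re_nonneg_of_re_mul_pos hu (huw ▸ hwτ)]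
    _ = (τ : ℂ) ^ (-a) * ((τ : ℂ) * (w / τ)) ^ a := by
        rw [mul_cpow_of_re_nonneg_of_re_mul_pos (by simpa using hτ.le) (by
          rwa [mul_div_cancel₀ _ hτ0]), ← mul_assoc, cpow_neg, inv_mul_cancel₀ (by
          rw [Ne, cpow_eq_zero_iff]; tauto), one_mul]
    _ = (τ : ℂ) ^ (-a) * w ^ a := by rw [mul_div_cancel₀ _ hτ0]

end Branch

section Fourier

lemma integral_exp_mul_sub (ω a : ℝ) (f : ℝ → ℂ) :
    ∫ t : ℝ, exp (I * ω * t) * f (t - a) = exp (I * ω * a) * ∫ t : ℝ, exp (I * ω * t) * f t := by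
  rw [← integral_const_mul,
    ← integral_sub_right_eq_self (fun t : ℝ => exp (I * ω * a) * (exp (I * ω * t) * f t)) a]
  congr 1 with t
  rw [← mul_assoc, ← exp_add]
  push_cast
  ring_nf

lemma integrable_exp_mul_sub (ω a : ℝ) {f : ℝ → ℂ} (hf : Integrable f) :
    Integrable fun t : ℝ => exp (I * ω * t) * f (t - a) :=
  (hf.comp_sub_right a).bdd_mul (c := 1) (by fun_prop : Continuous _).aestronglyMeasurable
    (ae_of_all _ fun t => by simp [norm_exp])

lemma integral_exp_mul_tsum_sub {c : ℕ → ℂ} (hc : Summable fun k => ‖c k‖) (a : ℕ → ℝ)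
    {f : ℝ → ℂ} (hf : Integrable f) (ω : ℝ) :
    ∫ t : ℝ, exp (I * ω * t) * ∑' k, c k * f (t - a k) =
      (∑' k, c k * exp (I * ω * a k)) * ∫ t : ℝ, exp (I * ω * t) * f t := by
  set F : ℕ → ℝ → ℂ := fun k t => c k * (exp (I * ω * t) * f (t - a k))
  have hF : ∀ k, Integrable (F k) := fun k => (integrable_exp_mul_sub ω (a k) hf).const_mul _
  have hnorm : ∀ k, ∫ t, ‖F k t‖ = ‖c k‖ * ∫ t, ‖f t‖ := fun k => by
    simp [F, norm_exp, integral_const_mul, integral_sub_right_eq_self (fun t => ‖f t‖)]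
  have hsum : Summable fun k => ∫ t, ‖F k t‖ := by
    simpa only [hnorm] using hc.mul_right (∫ t, ‖f t‖)
  calc ∫ t : ℝ, exp (I * ω * t) * ∑' k, c k * f (t - a k)
      = ∫ t : ℝ, ∑' k, F k t := by
        congr 1 with t
        rw [← tsum_mul_left]
        exact tsum_congr fun k => mul_left_comm _ _ _
    _ = ∑' k, ∫ t : ℝ, F k t := (integral_tsum_of_summable_integral_norm hF hsum).symm
    _ = _ := by
        simp only [F, integral_const_mul, integral_exp_mul_sub]
        simp only [← mul_assoc]
        exact tsum_mul_right

end Fourier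

section Symbol

variable {α : ℝ} {lam : ℂ} {τ : ℝ}

lemma summable_norm_exp_mul_g (hα0 : 0 ≤ α) (hα1 : α ≤ 1) (hlam : 0 ≤ lam.re) (hτ : 0 ≤ τ)
    (r : ℝ) : Summable fun k : ℕ => ‖exp (-lam * ((k : ℝ) - r) * τ) * (g α k : ℂ)‖ := by
  refine ((summable_abs_g hα0 hα1).mul_left (Real.exp (lam.re * r * τ))).of_nonneg_of_le
    (fun _ => norm_nonneg _) fun k => ?_
  rw [norm_mul, norm_exp, norm_real, Real.norm_eq_abs]
  gcongr
  have : 0 ≤ lam.re * k * τ := by positivity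
  simp only [mul_re, neg_re, neg_im, sub_re, sub_im, ofReal_re, ofReal_im]
  nlinarith

lemma tsum_exp_mul_g_mul_exp (hα0 : 0 < α) (hα1 : α ≤ 1) (hlam : 0 ≤ lam.re) (hτ : 0 ≤ τ)
    (r ω : ℝ) :
    ∑' k : ℕ, exp (-lam * ((k : ℝ) - r) * τ) * (g α k : ℂ) * exp (I * ω * (((k : ℝ) - r) * τ : ℝ)) =
      exp ((lam - I * ω) * r * τ) * (1 - exp (-((lam - I * ω) * τ))) ^ (α : ℂ) := by
  set u := lam - I * ω with hu
  have hx : ‖exp (-(u * τ))‖ ≤ 1 := by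
    simpa [norm_exp, u] using mul_nonneg hlam hτ
  have hterm : ∀ k : ℕ, exp (-lam * ((k : ℝ) - r) * τ) * (g α k : ℂ) *
      exp (I * ω * (((k : ℝ) - r) * τ : ℝ)) = exp (u * r * τ) * ((g α k : ℂ) * exp (-(u * τ)) ^ k) :=
    fun k => by
      rw [← exp_nat_mul, mul_right_comm, ← exp_add, mul_left_comm, ← exp_add, hu]
      push_cast
      ring_nf
  simp only [hterm, tsum_mul_left, (hasSum_g_mul_pow hα0 hα1 hx).tsum_eq]

end Symbol

theorem stmt_8 (α : ℝ) (hα0 : 0 < α) (hα1 : α < 1) (lam : ℂ) (hlam : 0 ≤ lam.re)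
    (τ : ℝ) (hτ : 0 < τ) (r : ℝ) (f : ℝ → ℂ) (hf : Integrable f) (ω : ℝ) :
    ∫ t : ℝ, Complex.exp (Complex.I * ω * t) * Aop α lam τ r f t =
      (lam - Complex.I * ω) ^ (α : ℂ) * W α r ((lam - Complex.I * ω) * τ) *
        ∫ t : ℝ, Complex.exp (Complex.I * ω * t) * f t := by
  set u := lam - I * ω
  have hu : 0 ≤ u.re := by simpa [u] using hlam
  calc ∫ t : ℝ, exp (I * ω * t) * Aop α lam τ r f t
      = (τ : ℂ) ^ (-(α : ℂ)) * ∫ t : ℝ, exp (I * ω * t) *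
          ∑' k : ℕ, (exp (-lam * ((k : ℝ) - r) * τ) * (g α k : ℂ)) * f (t - ((k : ℝ) - r) * τ) := by
        rw [← integral_const_mul]
        congr 1 with t
        rw [Aop, mul_left_comm]
    _ = (τ : ℂ) ^ (-(α : ℂ)) * (1 - exp (-(u * τ))) ^ (α : ℂ) * exp (u * r * τ) *
          ∫ t : ℝ, exp (I * ω * t) * f t := by
        rw [integral_exp_mul_tsum_sub (summable_norm_exp_mul_g hα0.le hα1.le hlam hτ.le r) _ hf,
          tsum_exp_mul_g_mul_exp hα0 hα1.le hlam hτ.le]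
        ring
    _ = _ := by
        rw [← cpow_mul_one_sub_exp_neg_div hu hτ, W, show (r : ℂ) * (u * τ) = u * r * τ by ring]
        ring
end

section
/- Let M ≥ 2, h > 0, and V_h the space of vectors v = (v_0,…,v_M) with v_0 = v_M = 0, inner product (u,v) = h ∑_{i=1}^{M-1} u_i v_i and norm ‖v‖ = √(v,v). With (A_x v)_i = (v_{i-1} + 10 v_i + v_{i+1})/12, for every v ∈ V_h: (2/3)‖v‖² ≤ (A_x v, v) ≤ ‖v‖². -/
/-! Writing `Δv i = v (i-1) - 2 v i + v (i+1)`, the stencil is `A_x = I + Δ / 12`. Summation by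
parts with the zero boundary values gives `(Δv, v) = -∑ (v (i+1) - v i)²`, which lies between
`-4 ‖v‖²` and `0` because `(a - b)² ≤ 2 a² + 2 b²`. Hence `(A_x v, v) ∈ [‖v‖² - ‖v‖² / 3, ‖v‖²]`. -/

open Finset

namespace DirichletGrid

variable {M : ℕ} {v : ℕ → ℝ}

lemma sum_Icc_one_pred_eq_sum_range (M : ℕ) (f : ℕ → ℝ) :
    ∑ i ∈ Icc 1 (M - 1), f i = ∑ i ∈ range (M - 1), f (i + 1) := by
  have hIcc : Icc 1 (M - 1) = Ico 1 M := by ext; simp only [mem_Icc, mem_Ico]; omega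
  rw [hIcc, sum_Ico_eq_sum_range]
  exact sum_congr rfl fun i _ => by rw [add_comm]

lemma sum_range_sq_eq_sum_Icc (hv0 : v 0 = 0) :
    ∑ i ∈ range M, v i ^ 2 = ∑ i ∈ Icc 1 (M - 1), v i ^ 2 := by
  rcases M with _ | n
  · simp
  · rw [sum_range_succ', sum_Icc_one_pred_eq_sum_range, hv0]
    simp

lemma sum_range_sq_succ_eq_sum_Icc (hvM : v M = 0) :
    ∑ i ∈ range M, v (i + 1) ^ 2 = ∑ i ∈ Icc 1 (M - 1), v i ^ 2 := by
  rcases M with _ | n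
  · simp
  · rw [sum_range_succ, sum_Icc_one_pred_eq_sum_range, hvM]
    simp

lemma sum_laplacian_mul_self (hv0 : v 0 = 0) (hvM : v M = 0) :
    ∑ i ∈ Icc 1 (M - 1), (v (i - 1) - 2 * v i + v (i + 1)) * v i =
      -∑ i ∈ range M, (v (i + 1) - v i) ^ 2 := by
  rcases M with _ | n
  · simp
  · have hsplit : ∑ i ∈ range (n + 1), (v (i + 1) - v i) ^ 2 =
        ∑ i ∈ range (n + 1), (v (i + 1) - v i) * v (i + 1) -
          ∑ i ∈ range (n + 1), (v (i + 1) - v i) * v i := by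
      rw [← sum_sub_distrib]
      exact sum_congr rfl fun i _ => by ring
    rw [hsplit, sum_range_succ _ n, sum_range_succ' _ n, hvM, hv0,
      sum_Icc_one_pred_eq_sum_range, Nat.add_sub_cancel]
    simp only [mul_zero, add_zero, Nat.add_sub_cancel]
    rw [← sum_sub_distrib, ← sum_neg_distrib]
    exact sum_congr rfl fun i _ => by ring

lemma sum_sq_sub_le_four_mul (hv0 : v 0 = 0) (hvM : v M = 0) :
    ∑ i ∈ range M, (v (i + 1) - v i) ^ 2 ≤ 4 * ∑ i ∈ Icc 1 (M - 1), v i ^ 2 :=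
  calc ∑ i ∈ range M, (v (i + 1) - v i) ^ 2
      ≤ ∑ i ∈ range M, (2 * v (i + 1) ^ 2 + 2 * v i ^ 2) :=
        sum_le_sum fun i _ => by nlinarith [sq_nonneg (v (i + 1) + v i)]
    _ = 4 * ∑ i ∈ Icc 1 (M - 1), v i ^ 2 := by
        rw [sum_add_distrib, ← mul_sum, ← mul_sum, sum_range_sq_succ_eq_sum_Icc hvM,
          sum_range_sq_eq_sum_Icc hv0]
        ring

lemma sum_stencil_mul_self (hv0 : v 0 = 0) (hvM : v M = 0) :
    ∑ i ∈ Icc 1 (M - 1), ((v (i - 1) + 10 * v i + v (i + 1)) / 12) * v i =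
      ∑ i ∈ Icc 1 (M - 1), v i ^ 2 - (∑ i ∈ range M, (v (i + 1) - v i) ^ 2) / 12 := by
  calc ∑ i ∈ Icc 1 (M - 1), ((v (i - 1) + 10 * v i + v (i + 1)) / 12) * v i
      = ∑ i ∈ Icc 1 (M - 1), v i ^ 2 +
          (∑ i ∈ Icc 1 (M - 1), (v (i - 1) - 2 * v i + v (i + 1)) * v i) / 12 := by
        rw [sum_div, ← sum_add_distrib]
        exact sum_congr rfl fun i _ => by ring
    _ = _ := by rw [sum_laplacian_mul_self hv0 hvM]; ring

end DirichletGrid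

open DirichletGrid in
theorem stmt_16_general (M : ℕ) (h : ℝ) (hh : 0 < h)
    (v : ℕ → ℝ) (hv0 : v 0 = 0) (hvM : v M = 0) :
    (2 / 3) * (h * ∑ i ∈ Finset.Icc 1 (M - 1), (v i) ^ 2) ≤
        h * ∑ i ∈ Finset.Icc 1 (M - 1), ((v (i - 1) + 10 * v i + v (i + 1)) / 12) * v i ∧
      h * ∑ i ∈ Finset.Icc 1 (M - 1), ((v (i - 1) + 10 * v i + v (i + 1)) / 12) * v i ≤
        h * ∑ i ∈ Finset.Icc 1 (M - 1), (v i) ^ 2 := by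
  rw [sum_stencil_mul_self hv0 hvM]
  have hD_nonneg : 0 ≤ ∑ i ∈ range M, (v (i + 1) - v i) ^ 2 :=
    sum_nonneg fun i _ => sq_nonneg _
  have hD_le := sum_sq_sub_le_four_mul hv0 hvM
  constructor <;> nlinarith

theorem stmt_16 (M : ℕ) (hM : 2 ≤ M) (h : ℝ) (hh : 0 < h)
    (v : ℕ → ℝ) (hv0 : v 0 = 0) (hvM : v M = 0) :
    (2 / 3) * (h * ∑ i ∈ Finset.Icc 1 (M - 1), (v i) ^ 2) ≤
        h * ∑ i ∈ Finset.Icc 1 (M - 1), ((v (i - 1) + 10 * v i + v (i + 1)) / 12) * v i ∧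
      h * ∑ i ∈ Finset.Icc 1 (M - 1), ((v (i - 1) + 10 * v i + v (i + 1)) / 12) * v i ≤
        h * ∑ i ∈ Finset.Icc 1 (M - 1), (v i) ^ 2 :=
  stmt_16_general M h hh v hv0 hvM
end
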